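/- arXiv:1510.00064 — 3 statements merged into one kernel-verified Lean document; each statement's English description precedes it below -/
import Mathlib

section
/- (Lemma 2, equivalence of optimal costs.) Let X and V be real random variables on a probability space, let a ∈ {−1, +1} and b₁, b₂ ∈ ℝ, and set X′ = aX + b₁ and V′ = V + b₂. Let P_T > 0. Then the infimum of E[(X − h(g(X) + V))²] over all measurable pairs (g, h) with E[(g(X))²] ≤ P_T equals the infimum of E[(X′ − h(g(X′) + V′))²] over all measurable pairs (g, h) with E[(g(X′))²] ≤ P_T. -/
open MeasureTheory ProbabilityTheory

def achievableCosts {Ω : Type*} [MeasurableSpace Ω] (μ : Measure Ω) (PT : ℝ) (X V : Ω → ℝ) :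
    Set ℝ :=
  {r | ∃ g h : ℝ → ℝ, Measurable g ∧ Measurable h ∧ (∫ w, (g (X w)) ^ 2 ∂μ) ≤ PT ∧
    r = ∫ w, (X w - h (g (X w) + V w)) ^ 2 ∂μ}

/-- The encoder undoes the affine change of the source and the decoder the shift of the noise
(and then reapplies the affine map), so admissible pairs correspond and errors scale by `a²`. -/
theorem achievableCosts_affine {Ω : Type*} [MeasurableSpace Ω] (μ : Measure Ω) (PT : ℝ)
    (X V : Ω → ℝ) {a : ℝ} (ha : a ≠ 0) (b₁ b₂ : ℝ) :
    achievableCosts μ PT (fun w => a * X w + b₁) (fun w => V w + b₂)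
      = (a ^ 2 * ·) '' achievableCosts μ PT X V := by
  ext r
  simp only [achievableCosts, Set.mem_image, Set.mem_ofPred_eq]
  constructor
  · rintro ⟨g, h, hg, hh, hpow, rfl⟩
    refine ⟨_, ⟨fun x => g (a * x + b₁), fun y => (h (y + b₂) - b₁) / a,
      hg.comp (by fun_prop), ((hh.comp (by fun_prop)).sub_const b₁).div_const a, hpow, rfl⟩, ?_⟩
    dsimp only
    rw [← integral_const_mul]
    refine integral_congr_ae (ae_of_all _ fun w => ?_)
    dsimp only
    rw [← mul_pow, mul_sub, mul_div_cancel₀ _ ha, add_assoc]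
    ring
  · rintro ⟨_, ⟨g, h, hg, hh, hpow, rfl⟩, rfl⟩
    refine ⟨fun x => g ((x - b₁) / a), fun y => a * h (y - b₂) + b₁,
      hg.comp (by fun_prop), ((hh.comp (by fun_prop)).const_mul a).add_const b₁,
      by simpa only [add_sub_cancel_right, mul_div_cancel_left₀ _ ha] using hpow, ?_⟩
    rw [← integral_const_mul]
    refine integral_congr_ae (ae_of_all _ fun w => ?_)
    simp only [← add_assoc, add_sub_cancel_right, mul_div_cancel_left₀ _ ha]
    ring

theorem optimal_cost_invariant_under_affine_transform_general
    {Ω : Type*} [MeasureSpace Ω]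
    (X V : Ω → ℝ)
    (a : ℝ) (ha : a = -1 ∨ a = 1) (b₁ b₂ : ℝ)
    (X' V' : Ω → ℝ) (hX' : X' = fun w => a * X w + b₁) (hV' : V' = fun w => V w + b₂)
    (PT : ℝ) :
    sInf {r : ℝ | ∃ g h : ℝ → ℝ, Measurable g ∧ Measurable h ∧
        (∫ w, (g (X w)) ^ 2 ∂ℙ) ≤ PT ∧
        r = ∫ w, (X w - h (g (X w) + V w)) ^ 2 ∂ℙ}
      = sInf {r : ℝ | ∃ g h : ℝ → ℝ, Measurable g ∧ Measurable h ∧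
          (∫ w, (g (X' w)) ^ 2 ∂ℙ) ≤ PT ∧
          r = ∫ w, (X' w - h (g (X' w) + V' w)) ^ 2 ∂ℙ} := by
  have ha_sq : a ^ 2 = 1 := by rcases ha with rfl | rfl <;> norm_num
  have ha_ne : a ≠ 0 := by rintro rfl; norm_num at ha_sq
  change sInf (achievableCosts ℙ PT X V) = sInf (achievableCosts ℙ PT X' V')
  rw [hX', hV', achievableCosts_affine ℙ PT X V ha_ne, ha_sq]
  simp only [one_mul, Set.image_id']

/-- **Lemma 2, equivalence of optimal costs.** For `X' = aX + b₁`,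
`V' = V + b₂` with `a ∈ {-1, +1}`, the optimal (infimum) mean squared error over all
measurable encoder/decoder pairs satisfying the power constraint `P_T` is the same for
the pair `(X, V)` as for the pair `(X', V')`. -/
theorem optimal_cost_invariant_under_affine_transform
    {Ω : Type*} [MeasureSpace Ω] [IsProbabilityMeasure (ℙ : Measure Ω)]
    (X V : Ω → ℝ) (hX : Measurable X) (hV : Measurable V)
    (a : ℝ) (ha : a = -1 ∨ a = 1) (b₁ b₂ : ℝ)
    (X' V' : Ω → ℝ) (hX' : X' = fun w => a * X w + b₁) (hV' : V' = fun w => V w + b₂)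
    (PT : ℝ) (hPT : 0 < PT) :
    sInf {r : ℝ | ∃ g h : ℝ → ℝ, Measurable g ∧ Measurable h ∧
        (∫ w, (g (X w)) ^ 2 ∂ℙ) ≤ PT ∧
        r = ∫ w, (X w - h (g (X w) + V w)) ^ 2 ∂ℙ}
      = sInf {r : ℝ | ∃ g h : ℝ → ℝ, Measurable g ∧ Measurable h ∧
          (∫ w, (g (X' w)) ^ 2 ∂ℙ) ≤ PT ∧
          r = ∫ w, (X' w - h (g (X' w) + V' w)) ^ 2 ∂ℙ} :=
  optimal_cost_invariant_under_affine_transform_general X V a ha b₁ b₂ X' V' hX' hV' PT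
end

section
/- (Lemma 3, mean squared error computation.) Let λ > 0, k > 0, P_T > 0, and set θ = √P_T, α = λθ, γ = 1/k. Let X be exponential with rate λ and let V have Gamma distribution with shape k and scale θ, with X and V independent. Define Y = αX − α/λ, Ỹ = Y + V, and X̂ = (1/α)·(γ/(γ+1))·Ỹ + (γ/(γ+1))·(1/λ). Then E[(X − X̂)²] = 1/((γ+1)λ²) = k/((k+1)λ²). -/
/-!
Substituting `Ỹ = α (X - 1/λ) + V` into `X̂`, the centring constants cancel and the error is
`X - X̂ = (X - (γ/α) V)/(γ + 1)`, a fixed combination of the independent variables `X` and `V`.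
Its second moment only involves the first two moments of the Gamma laws,
`E[V] = a/r` and `E[V²] = a(a+1)/r²` for shape `a` and rate `r` (and `X ~ Γ(1, λ)`).
-/

open MeasureTheory ProbabilityTheory Real

namespace ProbabilityTheory

section GammaMoments

variable {a r : ℝ}

lemma measurable_gammaPDF (a r : ℝ) : Measurable (gammaPDF a r) :=
  (measurable_gammaPDFReal a r).ennreal_ofReal

lemma pow_mul_gammaPDFReal (n : ℕ) (ha : 0 < a) (hr : 0 < r) {x : ℝ} (hx : x ≠ 0) :
    x ^ n * gammaPDFReal a r x
      = Gamma (a + n) / (Gamma a * r ^ n) * gammaPDFReal (a + n) r x := by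
  have hΓa : Gamma a ≠ 0 := (Gamma_pos_of_pos ha).ne'
  have hΓan : Gamma (a + n) ≠ 0 := (Gamma_pos_of_pos (by positivity)).ne'
  rcases hx.lt_or_gt with hneg | hpos
  · simp [gammaPDFReal, hneg.not_ge]
  · have hx_pow : x ^ (n : ℝ) * x ^ (a - 1) = x ^ (a + n - 1) := by
      rw [← rpow_add hpos]; ring_nf
    have hr_pow : r ^ (a + (n : ℝ)) = r ^ a * r ^ n := by
      rw [rpow_add hr, rpow_natCast]
    simp only [gammaPDFReal, if_pos hpos.le]
    rw [← rpow_natCast x n, hr_pow, ← hx_pow]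
    field_simp

lemma integral_gammaPDFReal (ha : 0 < a) (hr : 0 < r) : ∫ x, gammaPDFReal a r x = 1 := by
  rw [integral_eq_lintegral_of_nonneg_ae (.of_forall (gammaPDFReal_nonneg ha hr))
    (measurable_gammaPDFReal a r).aestronglyMeasurable]
  simpa [gammaPDF] using congrArg ENNReal.toReal (lintegral_gammaPDF_eq_one ha hr)

lemma integrable_gammaPDFReal (ha : 0 < a) (hr : 0 < r) : Integrable (gammaPDFReal a r) :=
  integrable_of_integral_eq_one (integral_gammaPDFReal ha hr)

lemma integral_pow_gammaMeasure (n : ℕ) (ha : 0 < a) (hr : 0 < r) :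
    ∫ x, x ^ n ∂gammaMeasure a r = Gamma (a + n) / (Gamma a * r ^ n) := by
  have hpdf : ∀ᵐ x, (gammaPDF a r x).toReal • x ^ n
      = Gamma (a + n) / (Gamma a * r ^ n) * gammaPDFReal (a + n) r x := by
    filter_upwards [compl_mem_ae_iff.mpr (measure_singleton (0 : ℝ))] with x hx
    rw [gammaPDF, ENNReal.toReal_ofReal (gammaPDFReal_nonneg ha hr x), smul_eq_mul, mul_comm,
      pow_mul_gammaPDFReal n ha hr hx]
  rw [gammaMeasure, integral_withDensity_eq_integral_toReal_smul
      (measurable_gammaPDF a r) (.of_forall fun _ ↦ ENNReal.ofReal_lt_top),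
    integral_congr_ae hpdf, integral_const_mul, integral_gammaPDFReal (by positivity) hr, mul_one]

lemma integrable_pow_gammaMeasure (n : ℕ) (ha : 0 < a) (hr : 0 < r) :
    Integrable (fun x ↦ x ^ n) (gammaMeasure a r) := by
  rw [gammaMeasure, integrable_withDensity_iff (measurable_gammaPDF a r)
    (.of_forall fun _ ↦ ENNReal.ofReal_lt_top)]
  refine ((integrable_gammaPDFReal (a := a + n) (by positivity) hr).const_mul
    (Gamma (a + n) / (Gamma a * r ^ n))).congr ?_
  filter_upwards [compl_mem_ae_iff.mpr (measure_singleton (0 : ℝ))] with x hx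
  rw [← pow_mul_gammaPDFReal n ha hr hx, gammaPDF,
    ENNReal.toReal_ofReal (gammaPDFReal_nonneg ha hr x)]

lemma integral_id_gammaMeasure (ha : 0 < a) (hr : 0 < r) :
    ∫ x, x ∂gammaMeasure a r = a / r := by
  have h := integral_pow_gammaMeasure 1 ha hr
  simp only [pow_one, Nat.cast_one, Gamma_add_one ha.ne'] at h
  rw [h]
  field_simp [(Gamma_pos_of_pos ha).ne']

lemma integral_sq_gammaMeasure (ha : 0 < a) (hr : 0 < r) :
    ∫ x, x ^ 2 ∂gammaMeasure a r = a * (a + 1) / r ^ 2 := by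
  have hΓ : Gamma (a + 2) = (a + 1) * (a * Gamma a) := by
    rw [show a + 2 = a + 1 + 1 by ring, Gamma_add_one (by positivity), Gamma_add_one ha.ne']
  rw [integral_pow_gammaMeasure 2 ha hr, Nat.cast_ofNat, hΓ]
  field_simp [(Gamma_pos_of_pos ha).ne']

end GammaMoments

section RandomVariables

variable {Ω : Type*} {mΩ : MeasurableSpace Ω} {P : Measure Ω} {X V : Ω → ℝ} {a r : ℝ}

lemma HasLaw.integrable_pow_of_gammaMeasure (hV : HasLaw V (gammaMeasure a r) P) (n : ℕ)
    (ha : 0 < a) (hr : 0 < r) : Integrable (fun ω ↦ V ω ^ n) P := by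
  have hint := integrable_pow_gammaMeasure n ha hr
  rw [← hV.map_eq] at hint
  exact (integrable_map_measure hint.aestronglyMeasurable hV.aemeasurable).1 hint

lemma HasLaw.integrable_of_gammaMeasure (hV : HasLaw V (gammaMeasure a r) P)
    (ha : 0 < a) (hr : 0 < r) : Integrable V P := by
  simpa using hV.integrable_pow_of_gammaMeasure 1 ha hr

lemma HasLaw.integral_of_gammaMeasure (hV : HasLaw V (gammaMeasure a r) P)
    (ha : 0 < a) (hr : 0 < r) : ∫ ω, V ω ∂P = a / r := by
  rw [hV.integral_eq, integral_id_gammaMeasure ha hr]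

lemma HasLaw.integral_sq_of_gammaMeasure (hV : HasLaw V (gammaMeasure a r) P)
    (ha : 0 < a) (hr : 0 < r) : ∫ ω, V ω ^ 2 ∂P = a * (a + 1) / r ^ 2 := by
  rw [← integral_sq_gammaMeasure ha hr]
  exact hV.integral_comp (f := fun x ↦ x ^ 2) (by fun_prop)

lemma IndepFun.integral_mul_sub_mul_sq (hXV : IndepFun X V P) (hX : Integrable X P)
    (hV : Integrable V P) (hX2 : Integrable (fun ω ↦ X ω ^ 2) P)
    (hV2 : Integrable (fun ω ↦ V ω ^ 2) P) (c d : ℝ) :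
    ∫ ω, (c * X ω - d * V ω) ^ 2 ∂P
      = c ^ 2 * ∫ ω, X ω ^ 2 ∂P - 2 * c * d * ((∫ ω, X ω ∂P) * ∫ ω, V ω ∂P)
        + d ^ 2 * ∫ ω, V ω ^ 2 ∂P := by
  have hXV_int : Integrable (fun ω ↦ X ω * V ω) P := hXV.integrable_mul hX hV
  have hEXV : ∫ ω, X ω * V ω ∂P = (∫ ω, X ω ∂P) * ∫ ω, V ω ∂P :=
    hXV.integral_mul_eq_mul_integral hX.1 hV.1
  have hcross : ∀ ω, 2 * (c * X ω) * (d * V ω) = 2 * c * d * (X ω * V ω) := fun ω ↦ by ring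
  simp_rw [sub_sq, mul_pow, hcross]
  have hX2_XV : Integrable (fun ω ↦ c ^ 2 * X ω ^ 2 - 2 * c * d * (X ω * V ω)) P :=
    (hX2.const_mul _).sub (hXV_int.const_mul _)
  rw [integral_add hX2_XV (hV2.const_mul _), integral_sub (hX2.const_mul _) (hXV_int.const_mul _),
    integral_const_mul, integral_const_mul, integral_const_mul, hEXV]

end RandomVariables

end ProbabilityTheory

theorem affine_scheme_mse_general
    {Ω : Type*} [MeasureSpace Ω]
    (lam k PT : ℝ) (hlam : 0 < lam) (hk : 0 < k) (hPT : 0 < PT)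
    (θ α γ : ℝ) (hθ : θ = Real.sqrt PT) (hα : α = lam * θ) (hγ : γ = 1 / k)
    (X V : Ω → ℝ) (hX : Measurable X) (hV : Measurable V)
    (hXlaw : Measure.map X ℙ = expMeasure lam)
    (hVlaw : Measure.map V ℙ = gammaMeasure k θ⁻¹)
    (hindep : IndepFun X V ℙ)
    (Y Ytilde Xhat : Ω → ℝ)
    (hY : Y = fun w => α * X w - α / lam)
    (hYtilde : Ytilde = fun w => Y w + V w)
    (hXhat : Xhat = fun w => (1 / α) * (γ / (γ + 1)) * Ytilde w + (γ / (γ + 1)) * (1 / lam)) :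
    (∫ w, (X w - Xhat w) ^ 2 ∂ℙ) = 1 / ((γ + 1) * lam ^ 2) ∧
      1 / ((γ + 1) * lam ^ 2) = k / ((k + 1) * lam ^ 2) := by
  have hθ0 : 0 < θ := hθ ▸ sqrt_pos.mpr hPT
  have hr : 0 < θ⁻¹ := inv_pos.mpr hθ0
  have hXlaw : HasLaw X (gammaMeasure 1 lam) := ⟨hX.aemeasurable, hXlaw⟩
  have hVlaw : HasLaw V (gammaMeasure k θ⁻¹) := ⟨hV.aemeasurable, hVlaw⟩
  have herror : ∀ w, X w - Xhat w = 1 / (γ + 1) * X w - γ / ((γ + 1) * α) * V w := by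
    intro w
    subst hXhat hYtilde hY hα hγ
    field_simp
    ring
  simp_rw [herror]
  rw [hindep.integral_mul_sub_mul_sq (hXlaw.integrable_of_gammaMeasure one_pos hlam)
      (hVlaw.integrable_of_gammaMeasure hk hr) (hXlaw.integrable_pow_of_gammaMeasure 2 one_pos hlam)
      (hVlaw.integrable_pow_of_gammaMeasure 2 hk hr),
    hXlaw.integral_sq_of_gammaMeasure one_pos hlam, hXlaw.integral_of_gammaMeasure one_pos hlam,
    hVlaw.integral_sq_of_gammaMeasure hk hr, hVlaw.integral_of_gammaMeasure hk hr]
  subst hγ hα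
  constructor <;> field_simp <;> ring

/-- **Lemma 3, mean squared error computation.** With `θ = √P_T`, `α = λθ`,
`γ = 1/k`, `X` exponential with rate `λ`, `V` Gamma with shape `k` and scale `θ` (rate `θ⁻¹`),
`X ⫫ V`, `Y = αX - α/λ`, `Ỹ = Y + V`, and
`X̂ = (1/α)(γ/(γ+1))Ỹ + (γ/(γ+1))(1/λ)`, one has `E[(X - X̂)²] = 1/((γ+1)λ²) = k/((k+1)λ²)`. -/
theorem affine_scheme_mse
    {Ω : Type*} [MeasureSpace Ω] [IsProbabilityMeasure (ℙ : Measure Ω)]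
    (lam k PT : ℝ) (hlam : 0 < lam) (hk : 0 < k) (hPT : 0 < PT)
    (θ α γ : ℝ) (hθ : θ = Real.sqrt PT) (hα : α = lam * θ) (hγ : γ = 1 / k)
    (X V : Ω → ℝ) (hX : Measurable X) (hV : Measurable V)
    (hXlaw : Measure.map X ℙ = expMeasure lam)
    (hVlaw : Measure.map V ℙ = gammaMeasure k θ⁻¹)
    (hindep : IndepFun X V ℙ)
    (Y Ytilde Xhat : Ω → ℝ)
    (hY : Y = fun w => α * X w - α / lam)
    (hYtilde : Ytilde = fun w => Y w + V w)
    (hXhat : Xhat = fun w => (1 / α) * (γ / (γ + 1)) * Ytilde w + (γ / (γ + 1)) * (1 / lam)) :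
    (∫ w, (X w - Xhat w) ^ 2 ∂ℙ) = 1 / ((γ + 1) * lam ^ 2) ∧
      1 / ((γ + 1) * lam ^ 2) = k / ((k + 1) * lam ^ 2) :=
  affine_scheme_mse_general lam k PT hlam hk hPT θ α γ hθ hα hγ X V hX hV hXlaw hVlaw hindep Y
    Ytilde Xhat hY hYtilde hXhat
end

section
/- (Theorem 4, unique optimal threshold.) Let λ > 0, c > 0, m ≥ 0, and define J : (0,∞) → ℝ by J(β) = 2∫₀^β x²·(λ/2)e^{−λx} dx + 2(c + m)∫_β^∞ (λ/2)e^{−λx} dx. Set β* = √(c + m). Then β* is the unique global minimizer of J on (0,∞): for every β ∈ (0,∞) with β ≠ β*, J(β) > J(β*). Moreover, J is strictly decreasing on (0, β*] and strictly increasing on [β*, ∞). -/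
/-!
By the fundamental theorem of calculus for the first term and the closed form `e^{-λβ}/2` of
the Laplace tail in the second, `J'(β) = λ e^{-λβ} (β² - (c + m))`, whose sign for `β > 0` is
that of `β - √(c + m)`.
-/

open MeasureTheory Real Set

/-- The paper's `J(β)`, with `a = c + m`. -/
noncomputable def thresholdCost (lam a β : ℝ) : ℝ :=
  2 * (∫ x in (0 : ℝ)..β, x ^ 2 * (lam / 2 * Real.exp (-lam * x)))
    + 2 * a * ∫ x in Set.Ioi β, lam / 2 * Real.exp (-lam * x)

lemma integral_Ioi_laplace_density {lam : ℝ} (hlam : 0 < lam) (b : ℝ) :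
    ∫ x in Ioi b, lam / 2 * exp (-lam * x) = exp (-lam * b) / 2 := by
  rw [integral_const_mul, integral_exp_mul_Ioi (neg_neg_of_pos hlam)]
  field_simp

lemma thresholdCost_hasDerivAt {lam : ℝ} (hlam : 0 < lam) (a β : ℝ) :
    HasDerivAt (thresholdCost lam a) (lam * exp (-lam * β) * (β ^ 2 - a)) β := by
  have hcont : Continuous fun x : ℝ => x ^ 2 * (lam / 2 * exp (-lam * x)) := by fun_prop
  have hbody : HasDerivAt (fun β => ∫ x in (0 : ℝ)..β, x ^ 2 * (lam / 2 * exp (-lam * x)))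
      (β ^ 2 * (lam / 2 * exp (-lam * β))) β :=
    intervalIntegral.integral_hasDerivAt_right (hcont.intervalIntegrable _ _)
      (hcont.stronglyMeasurableAtFilter _ _) hcont.continuousAt
  have htail : HasDerivAt (fun β => ∫ x in Ioi β, lam / 2 * exp (-lam * x))
      (-lam * exp (-lam * β) / 2) β := by
    simp_rw [integral_Ioi_laplace_density hlam]
    simpa [mul_comm] using (((hasDerivAt_id β).const_mul (-lam)).exp).div_const 2
  exact ((hbody.const_mul 2).add (htail.const_mul (2 * a))).congr_deriv (by ring)

section Monotonicity

variable {lam : ℝ} (hlam : 0 < lam) (a : ℝ)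
include hlam

lemma thresholdCost_strictAntiOn : StrictAntiOn (thresholdCost lam a) (Icc 0 √a) := by
  refine strictAntiOn_of_deriv_neg (convex_Icc 0 √a)
    (fun β _ => (thresholdCost_hasDerivAt hlam a β).continuousAt.continuousWithinAt) ?_
  intro β hβ
  rw [interior_Icc] at hβ
  rw [(thresholdCost_hasDerivAt hlam a β).deriv]
  have hsq : β ^ 2 < a := (lt_sqrt hβ.1.le).mp hβ.2
  exact mul_neg_of_pos_of_neg (by positivity) (by linarith)

lemma thresholdCost_strictMonoOn : StrictMonoOn (thresholdCost lam a) (Ici √a) := by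
  refine strictMonoOn_of_deriv_pos (convex_Ici √a)
    (fun β _ => (thresholdCost_hasDerivAt hlam a β).continuousAt.continuousWithinAt) ?_
  intro β hβ
  rw [interior_Ici] at hβ
  rw [(thresholdCost_hasDerivAt hlam a β).deriv]
  have hsq : a < β ^ 2 := lt_sq_of_sqrt_lt hβ
  exact mul_pos (by positivity) (by linarith)

end Monotonicity

theorem threshold_cost_unique_minimizer_general
    (lam c m : ℝ) (hlam : 0 < lam)
    (J : ℝ → ℝ)
    (hJ : J = fun β => 2 * (∫ x in (0 : ℝ)..β, x ^ 2 * (lam / 2 * Real.exp (-lam * x)))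
      + 2 * (c + m) * ∫ x in Set.Ioi β, lam / 2 * Real.exp (-lam * x))
    (βstar : ℝ) (hβstar : βstar = Real.sqrt (c + m)) :
    (∀ β : ℝ, 0 < β → β ≠ βstar → J βstar < J β) ∧
      StrictAntiOn J (Set.Ioc 0 βstar) ∧ StrictMonoOn J (Set.Ici βstar) := by
  have hJ' : J = thresholdCost lam (c + m) := hJ
  subst hJ' hβstar
  have hanti := thresholdCost_strictAntiOn hlam (c + m)
  have hmono := thresholdCost_strictMonoOn hlam (c + m)
  refine ⟨fun β hβ hne => ?_, hanti.mono Ioc_subset_Icc_self, hmono⟩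
  rcases hne.lt_or_gt with hlt | hgt
  · exact hanti ⟨hβ.le, hlt.le⟩ ⟨sqrt_nonneg _, le_rfl⟩ hlt
  · exact hmono self_mem_Ici hgt.le hgt

/-- **Theorem 4, unique optimal threshold.** With
`J(β) = 2∫₀^β x²(λ/2)e^{-λx} dx + 2(c+m)∫_β^∞ (λ/2)e^{-λx} dx` and `β* = √(c+m)`, the
threshold `β*` is the unique global minimizer of `J` on `(0, ∞)`; moreover `J` is strictly
decreasing on `(0, β*]` and strictly increasing on `[β*, ∞)`. -/
theorem threshold_cost_unique_minimizer
    (lam c m : ℝ) (hlam : 0 < lam) (hc : 0 < c) (hm : 0 ≤ m)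
    (J : ℝ → ℝ)
    (hJ : J = fun β => 2 * (∫ x in (0 : ℝ)..β, x ^ 2 * (lam / 2 * Real.exp (-lam * x)))
      + 2 * (c + m) * ∫ x in Set.Ioi β, lam / 2 * Real.exp (-lam * x))
    (βstar : ℝ) (hβstar : βstar = Real.sqrt (c + m)) :
    (∀ β : ℝ, 0 < β → β ≠ βstar → J βstar < J β) ∧
      StrictAntiOn J (Set.Ioc 0 βstar) ∧ StrictMonoOn J (Set.Ici βstar) :=
  threshold_cost_unique_minimizer_general lam c m hlam J hJ βstar hβstar
end
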